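/- If the bases B^{(1)},…,B^{(M)} are drawn i.i.d. from a distribution β on {X,Y,Z}^n, then E[INCONF_ε(P,B)] ≤ 2 Σ_{l=1}^L (1 − η ζ(P^{(l)},β))^M ≤ 2 Σ_{l=1}^L exp(−η ζ(P^{(l)},β) M), where η = 1 − exp(−ε²/2). -/

import Mathlib

/-- Single-qubit Pauli operators {I, X, Y, Z}. -/
inductive PauliOp : Type
  | I | X | Y | Z
deriving DecidableEq

instance : Fintype PauliOp :=
  ⟨{PauliOp.I, PauliOp.X, PauliOp.Y, PauliOp.Z}, by intro x; cases x <;> simp⟩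

/-- Single-qubit measurement bases 𝒫 = {X, Y, Z} (traceless Paulis). -/
inductive PauliBasis : Type
  | X | Y | Z
deriving DecidableEq

instance : Fintype PauliBasis :=
  ⟨{PauliBasis.X, PauliBasis.Y, PauliBasis.Z}, by intro x; cases x <;> simp⟩

instance : Inhabited PauliBasis := ⟨PauliBasis.X⟩

def PauliBasis.toPauli : PauliBasis → PauliOp
  | .X => .X
  | .Y => .Y
  | .Z => .Z

/-- The (non-identity) Pauli as a basis; junk value `X` on `I`. -/
def PauliOp.toBasis : PauliOp → PauliBasis
  | .I => .X
  | .X => .X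
  | .Y => .Y
  | .Z => .Z

/-- `Lift P`: measurement bases `B ∈ 𝒫^n` with `B_i = P_i` whenever `P_i ≠ I`. -/
def Lift {n : ℕ} (P : Fin n → PauliOp) : Finset (Fin n → PauliBasis) :=
  Finset.univ.filter fun B => ∀ i, P i ≠ PauliOp.I → (B i).toPauli = P i

/-- Support of a Pauli operator: qubits where it is not the identity. -/
def psupp {n : ℕ} (P : Fin n → PauliOp) : Finset (Fin n) :=
  Finset.univ.filter fun i => P i ≠ PauliOp.I

/-- ζ(P,β) = Σ_{B ∈ Lift(P)} β(B). -/
def zeta {n : ℕ} (P : Fin n → PauliOp) (β : (Fin n → PauliBasis) → ℝ) : ℝ :=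
  ∑ B ∈ Lift P, β B

/-!
Averaging the pointwise bound over i.i.d. bases, the product over shots factors, so the expectation
of the `l`-th summand is the `M`-th power of its one-shot expectation `1 - η ζ(P⁽ˡ⁾, β)`.
The exponential bound then follows from `1 - x ≤ exp (-x)`.
-/

open Finset

section ProductWeights

variable {S : Type*} [Fintype S]

theorem sum_prod_weight_mul_le {M : ℕ} {β : S → ℝ} (hβ : ∀ s, 0 ≤ β s)
    {F G : (Fin M → S) → ℝ} (hFG : ∀ ω, F ω ≤ G ω) :
    ∑ ω : Fin M → S, (∏ m, β (ω m)) * F ω ≤ ∑ ω : Fin M → S, (∏ m, β (ω m)) * G ω :=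
  sum_le_sum fun ω _ => mul_le_mul_of_nonneg_left (hFG ω) (prod_nonneg fun _ _ => hβ _)

theorem sum_prod_weight_mul_prod (M : ℕ) (β g : S → ℝ) :
    ∑ ω : Fin M → S, (∏ m, β (ω m)) * ∏ m, g (ω m) = (∑ s, β s * g s) ^ M := by
  simp_rw [← prod_mul_distrib]
  exact (Fintype.sum_pow (fun s => β s * g s) M).symm

theorem sum_mul_one_sub_mul_indicator [DecidableEq S] {β : S → ℝ} (hβ : ∑ s, β s = 1) (η : ℝ)
    (A : Finset S) :
    ∑ s, β s * (1 - η * if s ∈ A then 1 else 0) = 1 - η * ∑ s ∈ A, β s := by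
  simp_rw [mul_sub, mul_one, sum_sub_distrib, hβ, mul_left_comm (β _) η, ← mul_sum, mul_ite,
    mul_one, mul_zero, ← sum_filter, filter_mem_eq_inter, univ_inter]

end ProductWeights

theorem one_sub_pow_le_exp_neg_mul {x : ℝ} (hx : x ≤ 1) (M : ℕ) :
    (1 - x) ^ M ≤ Real.exp (-x * M) := by
  calc (1 - x) ^ M ≤ Real.exp (-x) ^ M :=
        pow_le_pow_left₀ (by linarith) (Real.one_sub_le_exp_neg x) M
    _ = Real.exp (-x * M) := by rw [← Real.exp_nat_mul, mul_comm]

theorem zeta_nonneg {n : ℕ} (P : Fin n → PauliOp) {β : (Fin n → PauliBasis) → ℝ}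
    (hβ0 : ∀ B, 0 ≤ β B) : 0 ≤ zeta P β :=
  sum_nonneg fun B _ => hβ0 B

theorem zeta_le_one {n : ℕ} (P : Fin n → PauliOp) {β : (Fin n → PauliBasis) → ℝ}
    (hβ0 : ∀ B, 0 ≤ β B) (hβ1 : ∑ B, β B = 1) : zeta P β ≤ 1 :=
  hβ1 ▸ sum_le_sum_of_subset_of_nonneg (subset_univ _) fun B _ _ => hβ0 B

/-- If the M bases are drawn i.i.d. from β, then (with η = 1 − exp(−ε²/2))
E[INCONF_ε(P,B)] ≤ 2 Σ_l (1 − η ζ(P^{(l)},β))^M ≤ 2 Σ_l exp(−η ζ(P^{(l)},β) M).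
The expectation is over the product distribution on M-tuples of bases, and
INCONF is any function bounded by the multiplicative inconfidence bound. -/
theorem statement13 {n : ℕ} (L M : ℕ) (P : Fin L → (Fin n → PauliOp))
    (β : (Fin n → PauliBasis) → ℝ)
    (hβ0 : ∀ B, 0 ≤ β B) (hβ1 : ∑ B, β B = 1)
    (ε : ℝ) (INCONF : (Fin M → (Fin n → PauliBasis)) → ℝ)
    (hbound : ∀ ω, INCONF ω ≤ 2 * ∑ l, ∏ m,
        (1 - (1 - Real.exp (-(ε ^ 2 / 2)))
          * (if ω m ∈ Lift (P l) then (1:ℝ) else 0))) :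
    (∑ ω : Fin M → (Fin n → PauliBasis), (∏ m, β (ω m)) * INCONF ω)
        ≤ 2 * ∑ l, (1 - (1 - Real.exp (-(ε ^ 2 / 2))) * zeta (P l) β) ^ M ∧
    2 * ∑ l, (1 - (1 - Real.exp (-(ε ^ 2 / 2))) * zeta (P l) β) ^ M
        ≤ 2 * ∑ l, Real.exp (-(1 - Real.exp (-(ε ^ 2 / 2))) * zeta (P l) β * M) := by
  set η := 1 - Real.exp (-(ε ^ 2 / 2))
  have hη : η ≤ 1 := by linarith [Real.exp_pos (-(ε ^ 2 / 2))]
  refine ⟨?_, ?_⟩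
  · calc _ ≤ ∑ ω : Fin M → (Fin n → PauliBasis), (∏ m, β (ω m)) *
            (2 * ∑ l, ∏ m, (1 - η * if ω m ∈ Lift (P l) then (1:ℝ) else 0)) :=
          sum_prod_weight_mul_le hβ0 hbound
      _ = 2 * ∑ l, (∑ B, β B * (1 - η * if B ∈ Lift (P l) then (1:ℝ) else 0)) ^ M := by
          simp_rw [← sum_prod_weight_mul_prod, mul_sum]
          rw [sum_comm]
          ring_nf
      _ = _ := by simp_rw [sum_mul_one_sub_mul_indicator hβ1, zeta]
  · gcongr 2 * ∑ l, ?_ with l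
    rw [neg_mul]
    exact one_sub_pow_le_exp_neg_mul
      ((mul_le_of_le_one_left (zeta_nonneg (P l) hβ0) hη).trans (zeta_le_one (P l) hβ0 hβ1)) M
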